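/- Let q = p^m be a power of a prime p, a ∈ F_{q²} with a^{q+1} = −1, and L an n×n unitary matrix over F_{q²}. Suppose δ = 0, γ ∈ F_{q²} satisfies γ^{q+1} = 2−n with 2−n ≠ 0 in F_{q²}, θ ∈ F_{q²} is nonzero, β = aθγ, α = (1−n)β·γ^{−q}, and λ = 0. Then the code generated by the bordered matrix G (with first row (θ, β,…,β, α, λ(L₁+⋯+Lₙ)) and (i+1)-st row (δ, (Jₙ−Iₙ)ᵢ, γ, aLᵢ)) is a Hermitian self-dual code of length 2n+2 and dimension n+1. -/

import Mathlib

open Matrix BigOperators Finset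

/-- The Hermitian inner product `x * y = ∑ i, x i * (y i)^q` over `F_{q²}`. -/
def hermInner (q : ℕ) {F : Type} [CommRing F] {ι : Type} [Fintype ι]
    (x y : ι → F) : F :=
  ∑ i, x i * y i ^ q

/-- The Hermitian dual of a set of vectors. -/
def hermDual (q : ℕ) {F : Type} [CommRing F] {ι : Type} [Fintype ι]
    (C : Set (ι → F)) : Set (ι → F) :=
  {y | ∀ x ∈ C, hermInner q x y = 0}

/-- The code generated by a matrix: the span of its rows. -/
def rowSpan {F : Type} [Field F] {k : ℕ} {ι : Type} (G : Matrix (Fin k) ι F) :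
    Submodule F (ι → F) :=
  Submodule.span F (Set.range fun i => G i)

/-!
Conjugation `z ↦ z ^ q` is the Frobenius automorphism `σ` of `F_{q²}`, of order two. The Hermitian
dual of the span of `k` independent vectors is then the kernel of the generator matrix with `σ⁻¹`
applied entrywise, which still has rank `k`; so a code of length `2k` spanned by `k` independent,
pairwise orthogonal rows is self-dual.

For the bordered matrix, independence comes from the invertible block `aL` together with `θ ≠ 0`.
Orthogonality of the rows reduces, via `a ā = -1`, `γ γ̄ = 2 - n` and `L L̄ᵀ = I`, to
`(J - I)(J - I)ᵀ = (n - 2) J + I` and the scalar identities `β β̄ = -(2 - n) θ θ̄`,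
`α ᾱ = -(1 - n)² θ θ̄`, `(n - 1) β + α γ̄ = 0`.
-/

section HermitianDual

variable {q : ℕ} {F : Type} [Field F] {ι : Type}

lemma finrank_rowSpan {k : ℕ} {G : Matrix (Fin k) ι F} (hG : LinearIndependent F G.row) :
    Module.finrank F (rowSpan G) = k :=
  (finrank_span_eq_card hG).trans (Fintype.card_fin k)

lemma LinearIndependent.map_ringEquiv {κ : Type} {v : κ → ι → F}
    (hv : LinearIndependent F v) (σ : F ≃+* F) :
    LinearIndependent F fun i j => σ (v i j) := by
  refine hv.map_of_injective_injective σ.symm ((σ : F →+ F).compLeft ι) (by simp) ?_ ?_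
  · intro m hm
    funext j
    simpa using congrFun hm j
  · intro r m
    funext j
    simp

variable [Fintype ι]

lemma hermInner_eq_sum_mul_map (σ : F ≃+* F) (hσ : ∀ z, σ z = z ^ q) (x y : ι → F) :
    hermInner q x y = ∑ i, x i * σ (y i) := by
  simp only [hermInner, hσ]

lemma hermDual_span (S : Set (ι → F)) :
    hermDual q (Submodule.span F S : Set (ι → F)) = hermDual q S := by
  refine Set.Subset.antisymm (fun y hy x hx => hy x (Submodule.subset_span hx)) fun y hy x hx => ?_
  induction hx using Submodule.span_induction with
  | mem x hx => exact hy x hx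
  | zero => simp [hermInner]
  | add u v _ _ hu hv => simp_all [hermInner, add_mul, Finset.sum_add_distrib]
  | smul c u _ hu => simp_all [hermInner, ← Finset.mul_sum, mul_assoc]

lemma mem_hermDual_rowSpan_iff {k : ℕ} (G : Matrix (Fin k) ι F) (y : ι → F) :
    y ∈ hermDual q (rowSpan G : Set (ι → F)) ↔ ∀ r, hermInner q (G r) y = 0 := by
  rw [rowSpan, hermDual_span]
  exact Set.forall_mem_range

lemma hermDual_rowSpan_eq_ker {k : ℕ} (σ : F ≃+* F) (hσ : ∀ z, σ z = z ^ q)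
    (G : Matrix (Fin k) ι F) :
    hermDual q (rowSpan G : Set (ι → F)) =
      (LinearMap.ker (G.map σ.symm).mulVecLin : Set (ι → F)) := by
  ext y
  simp only [mem_hermDual_rowSpan_iff, SetLike.mem_coe, LinearMap.mem_ker, mulVecLin_apply,
    funext_iff, mulVec, dotProduct, map_apply, Pi.zero_apply, hermInner_eq_sum_mul_map σ hσ]
  refine forall_congr' fun r => ?_
  rw [← (map_eq_zero_iff σ.symm σ.symm.injective), map_sum]
  simp only [map_mul, RingEquiv.symm_apply_apply]

theorem coe_rowSpan_eq_hermDual {k : ℕ} (σ : F ≃+* F) (hσ : ∀ z, σ z = z ^ q)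
    {G : Matrix (Fin k) ι F} (hG : LinearIndependent F G.row)
    (horth : ∀ r s, hermInner q (G r) (G s) = 0) (hcard : Fintype.card ι = k + k) :
    (rowSpan G : Set (ι → F)) = hermDual q (rowSpan G) := by
  set K := LinearMap.ker (G.map σ.symm).mulVecLin
  have hdual : hermDual q (rowSpan G : Set (ι → F)) = K := hermDual_rowSpan_eq_ker σ hσ G
  have hle : rowSpan G ≤ K := by
    refine Submodule.span_le.mpr ?_
    rintro _ ⟨s, rfl⟩
    rw [SetLike.mem_coe, ← SetLike.mem_coe, ← hdual, mem_hermDual_rowSpan_iff]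
    exact fun r => horth r s
  have hrank : (G.map σ.symm).rank = k := by
    rw [LinearIndependent.rank_matrix (M := G.map σ.symm) (hG.map_ringEquiv σ.symm),
      Fintype.card_fin]
  have hfinK : Module.finrank F K = k := by
    have := LinearMap.finrank_range_add_finrank_ker (G.map σ.symm).mulVecLin
    rw [Module.finrank_fintype_fun_eq_card, hcard] at this
    change (G.map σ.symm).rank + Module.finrank F K = _ at this
    omega
  rw [hdual, Submodule.eq_of_le_of_finrank_le hle (by rw [hfinK, finrank_rowSpan hG])]

end HermitianDual

lemma exists_ringEquiv_eq_pow_of_card_eq_sq {p m q : ℕ} (hp : p.Prime) (hq : q = p ^ m)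
    {F : Type} [Field F] [Fintype F] (hF : Fintype.card F = q ^ 2) :
    ∃ σ : F ≃+* F, (∀ z, σ z = z ^ q) ∧ ∀ z, σ (σ z) = z := by
  have := Fact.mk hp
  have : CharP F p := charP_of_card_eq_prime_pow (f := m * 2) (by rw [hF, hq, ← pow_mul])
  refine ⟨iterateFrobeniusEquiv F p m, fun z => by rw [iterateFrobeniusEquiv_def, hq], fun z => ?_⟩
  rw [iterateFrobeniusEquiv_def, iterateFrobeniusEquiv_def, ← pow_mul, ← hq, ← sq, ← hF,
    FiniteField.pow_card]

lemma Fintype.sum_ite_eq_zero_else {ι M : Type*} [Fintype ι] [DecidableEq ι] [AddCommGroup M]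
    (i : ι) (f : ι → M) : (∑ k, if k = i then 0 else f k) = ∑ k, f k - f i := by
  rw [Finset.sum_ite, Finset.sum_const_zero, zero_add, Finset.filter_not, Finset.filter_eq',
    if_pos (Finset.mem_univ i), ← Finset.erase_eq, Finset.sum_erase_eq_sub (Finset.mem_univ i)]

section Bordered

variable {F : Type} [Field F] {n : ℕ}

def borderedMatrix (θ β α δ γ lam a : F) (L : Matrix (Fin n) (Fin n) F) :
    Matrix (Fin (n + 1)) ((Unit ⊕ Fin n) ⊕ (Unit ⊕ Fin n)) F :=
  Fin.cons
    (Sum.elim (Sum.elim (fun _ => θ) fun _ => β) (Sum.elim (fun _ => α) fun j => lam * ∑ k, L k j))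
    fun i => Sum.elim (Sum.elim (fun _ => δ) fun j => if j = i then 0 else 1)
      (Sum.elim (fun _ => γ) fun j => a * L i j)

lemma hermInner_borderedMatrix_eq_zero {q : ℕ} (σ : F ≃+* F) (hσ : ∀ z, σ z = z ^ q)
    (hσσ : ∀ z, σ (σ z) = z) {a γ θ β α : F} {L : Matrix (Fin n) (Fin n) F}
    (ha : a * σ a = -1) (hL : L * (L.map σ)ᵀ = 1) (hγ : γ * σ γ = 2 - n) (hγ0 : (2 : F) - n ≠ 0)
    (hβ : β = a * θ * γ) (hα : α = (1 - n) * β * (σ γ)⁻¹) (r s : Fin (n + 1)) :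
    hermInner q (borderedMatrix θ β α 0 γ 0 a L r) (borderedMatrix θ β α 0 γ 0 a L s) = 0 := by
  have hγ' : γ ≠ 0 := by rintro rfl; exact hγ0 (by simpa using hγ.symm)
  have hσγ : σ γ ≠ 0 := by simpa using hγ'
  have hσα : σ α = (1 - n) * σ β * γ⁻¹ := by simp [hα, hσσ]
  have hLrow : ∀ i j, ∑ k, L i k * σ (L j k) = if i = j then 1 else 0 := fun i j => by
    simpa [mul_apply, one_apply] using congrFun (congrFun hL i) j
  have hββ : β * σ β = -(2 - n) * (θ * σ θ) := by
    rw [hβ, map_mul, map_mul]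
    linear_combination θ * σ θ * γ * σ γ * ha - θ * σ θ * hγ
  have hαα : α * σ α = (1 - n) ^ 2 * (β * σ β) / (2 - n) := by
    rw [hσα, hα, ← hγ]
    field_simp
  rw [hermInner_eq_sum_mul_map σ hσ]
  cases r using Fin.cases <;> cases s using Fin.cases <;>
    simp only [borderedMatrix, Fin.cons_zero, Fin.cons_succ, Fintype.sum_sum_type, Sum.elim_inl,
      Sum.elim_inr, map_mul, apply_ite σ, map_zero, map_one, mul_ite, ite_mul, zero_mul, mul_zero,
      one_mul, mul_one, Fintype.sum_ite_eq_zero_else, Finset.sum_const,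
      Finset.card_univ, Fintype.card_unique, Fintype.card_fin, nsmul_eq_mul, Nat.cast_one,
      add_zero, zero_add]
  case zero.zero =>
    rw [hαα, hββ]
    field_simp
    ring
  case zero.succ =>
    rw [hα]
    field_simp
    ring
  case succ.zero =>
    rw [hσα]
    field_simp
    ring
  case succ.succ i j =>
    have hLsum : ∑ k, a * L i k * (σ a * σ (L j k)) = a * σ a * ∑ k, L i k * σ (L j k) := by
      rw [Finset.mul_sum]
      exact Finset.sum_congr rfl fun k _ => by ring
    rw [hLsum, hLrow, ha, hγ]
    rcases eq_or_ne i j with rfl | hij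
    · simp only [if_true, sub_zero]
      ring
    · simp only [hij, hij.symm, if_false]
      ring

lemma linearIndependent_borderedMatrix {θ β α γ a : F} {L : Matrix (Fin n) (Fin n) F}
    (hθ : θ ≠ 0) (ha : a ≠ 0) (hL : IsUnit L) :
    LinearIndependent F (borderedMatrix θ β α 0 γ 0 a L).row := by
  refine linearIndependent_finCons.mpr ⟨?_, ?_⟩
  · refine LinearIndependent.of_comp (LinearMap.funLeft F F (Sum.inr ∘ Sum.inr)) ?_
    convert (linearIndependent_rows_iff_isUnit.mpr hL).units_smul fun _ => Units.mk0 a ha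
    ext i j
    simp
  · intro hspan
    have hle :
        Submodule.span F (Set.range fun i : Fin n => borderedMatrix θ β α 0 γ 0 a L i.succ) ≤
        LinearMap.ker (LinearMap.proj (R := F) (φ := fun _ => F) (Sum.inl (Sum.inl ()))) :=
      Submodule.span_le.mpr (by rintro _ ⟨i, rfl⟩; simp [borderedMatrix])
    exact hθ (by simpa [borderedMatrix] using hle hspan)

end Bordered

theorem stmt8_general (p m q n : ℕ) (hp : p.Prime) (hq : q = p ^ m)
    (F : Type) [Field F] [Fintype F] (hF : Fintype.card F = q ^ 2)
    (a : F) (ha : a ^ (q + 1) = -1)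
    (L : Matrix (Fin n) (Fin n) F) (hL : L * (L.map (· ^ q))ᵀ = 1)
    (α β γ δ lam θ : F)
    (hδ : δ = 0)
    (hγ : γ ^ (q + 1) = 2 - (n : F)) (hγ0 : (2 : F) - (n : F) ≠ 0)
    (hθ : θ ≠ 0)
    (hβ : β = a * θ * γ)
    (hα : α = (1 - (n : F)) * β * (γ ^ q)⁻¹)
    (hlam : lam = 0)
    (G : Matrix (Fin (n + 1)) ((Unit ⊕ Fin n) ⊕ (Unit ⊕ Fin n)) F)
    (hG1 : G 0 (Sum.inl (Sum.inl ())) = θ)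
    (hG2 : ∀ j, G 0 (Sum.inl (Sum.inr j)) = β)
    (hG3 : G 0 (Sum.inr (Sum.inl ())) = α)
    (hG4 : ∀ j, G 0 (Sum.inr (Sum.inr j)) = lam * ∑ k, L k j)
    (hG5 : ∀ i : Fin n, G i.succ (Sum.inl (Sum.inl ())) = δ)
    (hG6 : ∀ i j : Fin n, G i.succ (Sum.inl (Sum.inr j)) = if j = i then 0 else 1)
    (hG7 : ∀ i : Fin n, G i.succ (Sum.inr (Sum.inl ())) = γ)
    (hG8 : ∀ i j : Fin n, G i.succ (Sum.inr (Sum.inr j)) = a * L i j) :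
    (rowSpan G : Set ((Unit ⊕ Fin n) ⊕ (Unit ⊕ Fin n) → F)) = hermDual q (rowSpan G) ∧
    Module.finrank F (rowSpan G) = n + 1 := by
  obtain ⟨σ, hσ, hσσ⟩ := exists_ringEquiv_eq_pow_of_card_eq_sq hp hq hF
  have hσa : a * σ a = -1 := by rw [hσ, ← pow_succ', ha]
  have hσγ : γ * σ γ = 2 - n := by rw [hσ, ← pow_succ', hγ]
  have hσL : L * (L.map σ)ᵀ = 1 := by rwa [show ⇑σ = (· ^ q) from funext hσ]
  have hG : G = borderedMatrix θ β α 0 γ 0 a L := by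
    subst hδ hlam
    ext r ((_ | j) | (_ | j)) <;> cases r using Fin.cases <;>
      simp [borderedMatrix, hG1, hG2, hG3, hG4, hG5, hG6, hG7, hG8]
  have hind : LinearIndependent F G.row := hG ▸ linearIndependent_borderedMatrix hθ
    (left_ne_zero_of_mul (hσa ▸ neg_ne_zero.mpr one_ne_zero))
    ((isUnit_iff_isUnit_det L).mpr (isUnit_det_of_right_inverse hσL))
  have horth : ∀ r s, hermInner q (G r) (G s) = 0 := hG ▸
    hermInner_borderedMatrix_eq_zero σ hσ hσσ hσa hσL hσγ hγ0 hβ (by rw [hα, hσ])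
  have hcard : Fintype.card ((Unit ⊕ Fin n) ⊕ (Unit ⊕ Fin n)) = (n + 1) + (n + 1) := by
    simp only [Fintype.card_sum, Fintype.card_unique, Fintype.card_fin]
    ring
  exact ⟨coe_rowSpan_eq_hermDual σ hσ hind horth hcard, finrank_rowSpan hind⟩

/-- Theorem 1, case 1) of the paper. With `δ = 0`,
`γ^{q+1} = 2 - n ≠ 0`, `θ ≠ 0`, `β = aθγ`, `α = (1-n)β·γ^{-q}`, `λ = 0`,
the bordered matrix `G` generates a Hermitian self-dual code of length `2n+2`
and dimension `n+1`. -/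
theorem stmt8 (p m q n : ℕ) (hp : p.Prime) (hm : 0 < m) (hq : q = p ^ m)
    (F : Type) [Field F] [Fintype F] (hF : Fintype.card F = q ^ 2)
    (a : F) (ha : a ^ (q + 1) = -1)
    (L : Matrix (Fin n) (Fin n) F) (hL : L * (L.map (· ^ q))ᵀ = 1)
    (α β γ δ lam θ : F)
    (hδ : δ = 0)
    (hγ : γ ^ (q + 1) = 2 - (n : F)) (hγ0 : (2 : F) - (n : F) ≠ 0)
    (hθ : θ ≠ 0)
    (hβ : β = a * θ * γ)
    (hα : α = (1 - (n : F)) * β * (γ ^ q)⁻¹)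
    (hlam : lam = 0)
    (G : Matrix (Fin (n + 1)) ((Unit ⊕ Fin n) ⊕ (Unit ⊕ Fin n)) F)
    (hG1 : G 0 (Sum.inl (Sum.inl ())) = θ)
    (hG2 : ∀ j, G 0 (Sum.inl (Sum.inr j)) = β)
    (hG3 : G 0 (Sum.inr (Sum.inl ())) = α)
    (hG4 : ∀ j, G 0 (Sum.inr (Sum.inr j)) = lam * ∑ k, L k j)
    (hG5 : ∀ i : Fin n, G i.succ (Sum.inl (Sum.inl ())) = δ)
    (hG6 : ∀ i j : Fin n, G i.succ (Sum.inl (Sum.inr j)) = if j = i then 0 else 1)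
    (hG7 : ∀ i : Fin n, G i.succ (Sum.inr (Sum.inl ())) = γ)
    (hG8 : ∀ i j : Fin n, G i.succ (Sum.inr (Sum.inr j)) = a * L i j) :
    (rowSpan G : Set ((Unit ⊕ Fin n) ⊕ (Unit ⊕ Fin n) → F)) = hermDual q (rowSpan G) ∧
    Module.finrank F (rowSpan G) = n + 1 :=
  stmt8_general p m q n hp hq F hF a ha L hL α β γ δ lam θ hδ hγ hγ0 hθ hβ hα hlam G hG1 hG2 hG3 hG4
    hG5 hG6 hG7 hG8
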